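/- Let H₁ and H₂ be Hermitian operators on a nonzero finite-dimensional complex inner product space H with H₂ positive semidefinite, and let K = ker H₂ be nonzero with K ≠ H, so that μ := λ(H₂|_{K⊥}) > 0 (the smallest eigenvalue of H₂ restricted to the orthogonal complement of K). Set J = (8‖H₁‖² + 2‖H₁‖)/μ. Then λ(H₁ + J·H₂) ≥ λ(H₁|_K) − 1/8. (Lemma A.3 of the paper.) -/

import Mathlib

open scoped ComplexInnerProductSpace

/-- The smallest eigenvalue of a Hermitian operator `A`, i.e. the infimum of
`⟨v, A v⟩` over unit vectors `v`. -/
noncomputable def lambdaMin {H : Type*} [NormedAddCommGroup H] [InnerProductSpace ℂ H]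
    (A : H →L[ℂ] H) : ℝ :=
  ⨅ v : {v : H // ‖v‖ = 1}, (⟪(v : H), A v⟫).re

/-- The smallest eigenvalue of the compression of `A` to a subspace `S`, i.e. the
infimum of `⟨v, A v⟩` over unit vectors `v ∈ S`. -/
noncomputable def lambdaMinOn {H : Type*} [NormedAddCommGroup H] [InnerProductSpace ℂ H]
    (A : H →L[ℂ] H) (S : Submodule ℂ H) : ℝ :=
  ⨅ v : {v : H // v ∈ S ∧ ‖v‖ = 1}, (⟪(v : H), A v⟫).re

/-!
Split a unit vector as `v = x + y` with `x ∈ K = ker H₂`, `y ∈ Kᗮ`, and put `a = ‖H₁‖`,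
`L = λ(H₁|_K)`, `t = ‖y‖`. As `H₂` is symmetric and kills `x`, `⟪v, H₂ v⟫ = ⟪y, H₂ y⟫ ≥ μ t²`,
and `⟪v, H₁ v⟫ ≥ L ‖x‖² - 2a‖x‖t - a t²`. Since `Jμ = 8a² + 2a`, `‖x‖² = 1 - t²`, `L ≤ a` and
`‖x‖ ≤ 1`, the total is at least `L + 8a²t² - 2at = L + (8at - 1)²/8 - 1/8`.
-/

section Symmetric

variable {𝕜 E : Type*} [RCLike 𝕜] [NormedAddCommGroup E] [InnerProductSpace 𝕜 E]

theorem LinearMap.IsSymmetric.re_inner_add_map_add {T : E →ₗ[𝕜] E} (hT : T.IsSymmetric)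
    (x y : E) :
    RCLike.re (inner 𝕜 (x + y) (T (x + y))) = RCLike.re (inner 𝕜 x (T x)) +
      2 * RCLike.re (inner 𝕜 x (T y)) + RCLike.re (inner 𝕜 y (T y)) := by
  have hcross : RCLike.re (inner 𝕜 y (T x)) = RCLike.re (inner 𝕜 x (T y)) := by
    rw [← hT, ← inner_conj_symm, RCLike.conj_re]
  simp only [map_add, inner_add_left, inner_add_right, hcross]
  ring

theorem LinearMap.IsSymmetric.inner_add_map_add_of_mem_ker {T : E →ₗ[𝕜] E}
    (hT : T.IsSymmetric) {x : E} (hx : x ∈ LinearMap.ker T) (y : E) :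
    inner 𝕜 (x + y) (T (x + y)) = inner 𝕜 y (T y) := by
  rw [LinearMap.mem_ker] at hx
  rw [map_add, hx, zero_add, inner_add_left, ← hT, hx, inner_zero_left, zero_add]

end Symmetric

section RayleighQuotient

variable {H : Type*} [NormedAddCommGroup H] [InnerProductSpace ℂ H]

theorem abs_re_inner_apply_le (A : H →L[ℂ] H) (x y : H) :
    |(⟪x, A y⟫).re| ≤ ‖A‖ * ‖x‖ * ‖y‖ :=
  calc |(⟪x, A y⟫).re| ≤ ‖x‖ * ‖A y‖ := (Complex.abs_re_le_norm _).trans (norm_inner_le_norm _ _)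
    _ ≤ ‖x‖ * (‖A‖ * ‖y‖) := by gcongr; exact A.le_opNorm y
    _ = ‖A‖ * ‖x‖ * ‖y‖ := by ring

theorem neg_opNorm_le_re_inner_apply_self {A : H →L[ℂ] H} {v : H} (hv : ‖v‖ = 1) :
    -‖A‖ ≤ (⟪v, A v⟫).re := by
  have h := abs_re_inner_apply_le A v v
  rw [hv, mul_one, mul_one] at h
  exact (abs_le.mp h).1

theorem lambdaMinOn_le (A : H →L[ℂ] H) {S : Submodule ℂ H} {v : H} (hvS : v ∈ S)
    (hv : ‖v‖ = 1) : lambdaMinOn A S ≤ (⟪v, A v⟫).re :=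
  ciInf_le (f := fun u : {u : H // u ∈ S ∧ ‖u‖ = 1} => (⟪(u : H), A u⟫).re)
    ⟨-‖A‖, by rintro _ ⟨u, rfl⟩; exact neg_opNorm_le_re_inner_apply_self u.2.2⟩ ⟨v, hvS, hv⟩

theorem lambdaMinOn_le_opNorm (A : H →L[ℂ] H) (S : Submodule ℂ H) : lambdaMinOn A S ≤ ‖A‖ := by
  rcases isEmpty_or_nonempty {v : H // v ∈ S ∧ ‖v‖ = 1} with _ | ⟨v, hvS, hv⟩
  · rw [lambdaMinOn, iInf_of_isEmpty, Real.sInf_empty]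
    exact norm_nonneg A
  · have h := abs_re_inner_apply_le A v v
    rw [hv, mul_one, mul_one] at h
    exact (lambdaMinOn_le A hvS hv).trans (abs_le.mp h).2

theorem lambdaMinOn_mul_norm_sq_le (A : H →L[ℂ] H) {S : Submodule ℂ H} {x : H} (hx : x ∈ S) :
    lambdaMinOn A S * ‖x‖ ^ 2 ≤ (⟪x, A x⟫).re := by
  rcases eq_or_ne x 0 with rfl | hx0
  · simp
  set u : H := (‖x‖⁻¹ : ℂ) • x
  have hxu : x = (‖x‖ : ℂ) • u := by
    rw [smul_smul, ← Complex.ofReal_inv, ← Complex.ofReal_mul,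
      mul_inv_cancel₀ (norm_ne_zero_iff.mpr hx0), Complex.ofReal_one, one_smul]
  have hu := lambdaMinOn_le A (S.smul_mem _ hx) (norm_smul_inv_norm hx0)
  have hinner : (⟪x, A x⟫).re = ‖x‖ ^ 2 * (⟪u, A u⟫).re := by
    rw [hxu, map_smul, inner_smul_left, inner_smul_right, Complex.conj_ofReal, ← mul_assoc,
      ← Complex.ofReal_mul, Complex.re_ofReal_mul, ← hxu, sq]
  rw [hinner, mul_comm]
  exact mul_le_mul_of_nonneg_left hu (sq_nonneg _)

theorem le_lambdaMin [Nontrivial H] {A : H →L[ℂ] H} {c : ℝ}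
    (h : ∀ v : H, ‖v‖ = 1 → c ≤ (⟪v, A v⟫).re) : c ≤ lambdaMin A := by
  obtain ⟨v, hv⟩ := exists_norm_eq H zero_le_one
  have : Nonempty {v : H // ‖v‖ = 1} := ⟨⟨v, hv⟩⟩
  exact le_ciInf fun v => h v v.2

end RayleighQuotient

theorem sub_eighth_le_of_sq_add_sq_eq_one {a L s t : ℝ} (ha : 0 ≤ a) (hL : L ≤ a)
    (hs : 0 ≤ s) (ht : 0 ≤ t) (hst : s ^ 2 + t ^ 2 = 1) :
    L - 1 / 8 ≤ L * s ^ 2 - 2 * a * s * t - a * t ^ 2 + (8 * a ^ 2 + 2 * a) * t ^ 2 := by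
  have hs1 : s ≤ 1 := by nlinarith
  have hcross : a * s * t ≤ a * t := by
    nlinarith [mul_nonneg (mul_nonneg ha ht) (sub_nonneg.mpr hs1)]
  nlinarith [sq_nonneg (8 * a * t - 1)]

theorem projection_lemma_reformulated_general {H : Type*} [NormedAddCommGroup H]
    [InnerProductSpace ℂ H] [FiniteDimensional ℂ H] [Nontrivial H]
    (H1 H2 : H →L[ℂ] H)
    (h1 : ∀ x y : H, ⟪H1 x, y⟫ = ⟪x, H1 y⟫)
    (h2 : ∀ x y : H, ⟪H2 x, y⟫ = ⟪x, H2 y⟫)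
    (K : Submodule ℂ H) (hK : K = LinearMap.ker (H2 : H →ₗ[ℂ] H))
    (μ : ℝ) (hμdef : μ = lambdaMinOn H2 Kᗮ) (hμpos : 0 < μ)
    (J : ℝ) (hJ : J = (8 * ‖H1‖ ^ 2 + 2 * ‖H1‖) / μ) :
    lambdaMin (H1 + (J : ℂ) • H2) ≥ lambdaMinOn H1 K - 1 / 8 := by
  have hJ0 : 0 ≤ J := by rw [hJ]; positivity
  have hJμ : J * μ = 8 * ‖H1‖ ^ 2 + 2 * ‖H1‖ := by rw [hJ]; field_simp
  refine le_lambdaMin fun v hv => ?_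
  set x := K.starProjection v
  set y := v - x
  have hxK : x ∈ K := K.starProjection_apply_mem v
  have hyK : y ∈ Kᗮ := K.sub_starProjection_mem_orthogonal v
  have hv_eq : v = x + y := (add_sub_cancel x v).symm
  have hnorm : ‖x‖ ^ 2 + ‖y‖ ^ 2 = 1 := by
    rw [sq, sq, ← norm_add_sq_eq_norm_sq_add_norm_sq_of_inner_eq_zero x y
      (K.inner_right_of_mem_orthogonal hxK hyK), ← hv_eq, hv, mul_one]
  have hH1 := LinearMap.IsSymmetric.re_inner_add_map_add (T := (H1 : H →ₗ[ℂ] H)) h1 x y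
  have hH2 := LinearMap.IsSymmetric.inner_add_map_add_of_mem_ker (T := (H2 : H →ₗ[ℂ] H)) h2
    (hK ▸ hxK) y
  have hJy : (8 * ‖H1‖ ^ 2 + 2 * ‖H1‖) * ‖y‖ ^ 2 ≤ J * (⟪y, H2 y⟫).re := by
    rw [← hJμ, mul_assoc]
    exact mul_le_mul_of_nonneg_left (hμdef ▸ lambdaMinOn_mul_norm_sq_le H2 hyK) hJ0
  have hval : (⟪v, (H1 + (J : ℂ) • H2) v⟫).re = (⟪v, H1 v⟫).re + J * (⟪v, H2 v⟫).re := by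
    simp only [add_apply, smul_apply, inner_add_right, inner_smul_right, Complex.add_re,
      Complex.re_ofReal_mul]
  rw [hval, hv_eq]
  simp only [ContinuousLinearMap.coe_coe, RCLike.re_to_complex] at hH1 hH2
  rw [hH1, hH2]
  have hscalar := sub_eighth_le_of_sq_add_sq_eq_one (norm_nonneg H1) (lambdaMinOn_le_opNorm H1 K)
    (norm_nonneg x) (norm_nonneg y) hnorm
  linarith [lambdaMinOn_mul_norm_sq_le H1 hxK, (abs_le.mp (abs_re_inner_apply_le H1 x y)).1,
    (abs_le.mp (abs_re_inner_apply_le H1 y y)).1]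

/-- **Lemma A.3.** Let `H₁, H₂` be Hermitian operators on a nonzero finite-dimensional
complex inner product space, with `H₂` positive semidefinite, `K = ker H₂` nonzero and
proper, so that `μ = λ(H₂|_{K⊥}) > 0`. With `J = (8‖H₁‖² + 2‖H₁‖)/μ`, one has
`λ(H₁ + J·H₂) ≥ λ(H₁|_K) − 1/8`. -/
theorem projection_lemma_reformulated {H : Type*} [NormedAddCommGroup H]
    [InnerProductSpace ℂ H] [FiniteDimensional ℂ H] [Nontrivial H]
    (H1 H2 : H →L[ℂ] H)
    (h1 : ∀ x y : H, ⟪H1 x, y⟫ = ⟪x, H1 y⟫)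
    (h2 : ∀ x y : H, ⟪H2 x, y⟫ = ⟪x, H2 y⟫)
    (h2pos : ∀ v : H, 0 ≤ (⟪v, H2 v⟫).re)
    (K : Submodule ℂ H) (hK : K = LinearMap.ker (H2 : H →ₗ[ℂ] H))
    (hKbot : K ≠ ⊥) (hKtop : K ≠ ⊤)
    (μ : ℝ) (hμdef : μ = lambdaMinOn H2 Kᗮ) (hμpos : 0 < μ)
    (J : ℝ) (hJ : J = (8 * ‖H1‖ ^ 2 + 2 * ‖H1‖) / μ) :
    lambdaMin (H1 + (J : ℂ) • H2) ≥ lambdaMinOn H1 K - 1 / 8 :=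
  projection_lemma_reformulated_general H1 H2 h1 h2 K hK μ hμdef hμpos J hJ
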